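/- arXiv:1906.08964 — 2 statements merged into one kernel-verified Lean document; each statement's English description precedes it below -/
import Mathlib

section
/- The density ρ_g of the pushforward g*m of the Haar measure under an element g of the infinite-dimensional p-adic affine group satisfies ∫_{ℚ_p} |ρ_g(x) − 1| dm(x) < ∞; equivalently, ρ_g − 1 is a compactly supported locally constant real-valued function. -/
open MeasureTheory
open scoped ENNReal

noncomputable instance (p : ℕ) [Fact p.Prime] : MeasurableSpace ℚ_[p] := borel _
instance (p : ℕ) [Fact p.Prime] : BorelSpace ℚ_[p] := ⟨rfl⟩

/-! Since `1_{Kᶜ} = 1 - 1_K`, we have `ρ_g - 1 = ∑ₖ |aₖ|_p 1_{Cₖ} - 1_K`, a finite combination of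
indicators of sets that are compact and open: balls of positive radius in the ultrametric space
`ℚ_p`, and their images under the affine homeomorphisms `x ↦ (x + bₖ) / aₖ`. Such a function is
locally constant, hence continuous, and has compact support, hence is integrable for any Haar
measure. -/

theorem IsClopen.isLocallyConstant_indicator {X M : Type*} [TopologicalSpace X] [Zero M]
    {s : Set X} (hs : IsClopen s) (v : M) : IsLocallyConstant (s.indicator fun _ => v) :=
  (LocallyConstant.indicator (LocallyConstant.const X v) hs).isLocallyConstant

theorem IsLocallyConstant.finset_sum {X ι M : Type*} [TopologicalSpace X] [AddCommMonoid M]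
    {s : Finset ι} {f : ι → X → M} (hf : ∀ i ∈ s, IsLocallyConstant (f i)) :
    IsLocallyConstant (∑ i ∈ s, f i) :=
  Finset.sum_induction f IsLocallyConstant (fun _ _ hf hg => hf.add hg)
    IsLocallyConstant.zero hf

theorem IsCompact.hasCompactSupport_indicator {X M : Type*} [TopologicalSpace X] [Zero M]
    {s : Set X} (hs : IsCompact s) (hs' : IsClosed s) (f : X → M) :
    HasCompactSupport (s.indicator f) :=
  HasCompactSupport.intro' hs hs' fun _ hx => Set.indicator_of_notMem hx f

theorem isClopen_image_add_div {𝕜 : Type*} [DivisionRing 𝕜] [TopologicalSpace 𝕜]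
    [ContinuousAdd 𝕜] [ContinuousMul 𝕜] {s : Set 𝕜} (hs : IsClopen s) {a : 𝕜} (ha : a ≠ 0)
    (b : 𝕜) : IsClopen ((fun x => (x + b) / a) '' s) := by
  let h := (Homeomorph.addRight b).trans (Homeomorph.mulRight₀ a⁻¹ (inv_ne_zero ha))
  have hh : (fun x => (x + b) / a) = h := funext fun x => div_eq_mul_inv (x + b) a
  rw [hh]
  exact ⟨h.isClosed_image.2 hs.1, h.isOpen_image.2 hs.2⟩

theorem padicAff_density_integrable_general (p : ℕ) [Fact p.Prime] (m : Measure ℚ_[p])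
    [m.IsAddHaarMeasure]
    (N : ℕ) (c : Fin N → ℚ_[p]) (r : Fin N → ℝ) (hr : ∀ k, 0 < r k)
    (B : Fin N → Set ℚ_[p]) (hB : ∀ k, B k = Metric.closedBall (c k) (r k))
    (K : Set ℚ_[p]) (hK : K = ⋃ k, B k)
    (aco : Fin N → ℚ_[p]) (ha : ∀ k, aco k ≠ 0) (bco : Fin N → ℚ_[p])
    (C : Fin N → Set ℚ_[p]) (hC : ∀ k, C k = (fun x => (x + bco k) / aco k) '' B k)
    (ρ : ℚ_[p] → ℝ)
    (hρ : ∀ x, ρ x = (∑ k, Set.indicator (C k) (fun _ => ‖aco k‖) x)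
        + Set.indicator Kᶜ (fun _ => (1 : ℝ)) x) :
    (∫⁻ x, ENNReal.ofReal |ρ x - 1| ∂m) < ∞ ∧
    HasCompactSupport (fun x => ρ x - 1) ∧
    IsLocallyConstant (fun x => ρ x - 1) := by
  have hBclopen k : IsClopen (B k) := hB k ▸ IsUltrametricDist.isClopen_closedBall _ (hr k).ne'
  have hBcpt k : IsCompact (B k) := hB k ▸ isCompact_closedBall _ _
  have hCclopen k : IsClopen (C k) := hC k ▸ isClopen_image_add_div (hBclopen k) (ha k) _
  have hCcpt k : IsCompact (C k) := hC k ▸ (hBcpt k).image (by fun_prop)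
  have hKclopen : IsClopen K := hK ▸ isClopen_iUnion_of_finite hBclopen
  have hKcpt : IsCompact K := hK ▸ isCompact_iUnion hBcpt
  have hρ_sub : (fun x => ρ x - 1) =
      (∑ k, (C k).indicator fun _ => ‖aco k‖) - K.indicator fun _ => (1 : ℝ) := by
    ext x
    simp only [hρ, Set.indicator_compl, Pi.sub_apply, Finset.sum_apply]
    ring
  have hlc : IsLocallyConstant (fun x => ρ x - 1) := by
    rw [hρ_sub]
    exact (IsLocallyConstant.finset_sum fun k _ => (hCclopen k).isLocallyConstant_indicator _).sub
      (hKclopen.isLocallyConstant_indicator _)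
  have hcs : HasCompactSupport (fun x => ρ x - 1) := by
    rw [hρ_sub]
    refine .sub (.finset_sum fun k _ => ?_) ?_
    · exact (hCcpt k).hasCompactSupport_indicator (hCclopen k).isClosed _
    · exact hKcpt.hasCompactSupport_indicator hKclopen.isClosed _
  refine ⟨?_, hcs, hlc⟩
  simpa only [HasFiniteIntegral, Real.enorm_eq_ofReal_abs] using
    (hlc.continuous.integrable_of_hasCompactSupport hcs (μ := m)).hasFiniteIntegral

/-- The density `ρ_g = ∑ |a_k|_p 1_{C_k} + 1_{K^c}` (with `C_k = a_k⁻¹(B_k + b_k)`, the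
`B_k` pairwise disjoint balls with union `K`) of the pushforward `g*m` of Haar measure
under an element `g` of the infinite-dimensional `p`-adic affine group satisfies
`∫ |ρ_g − 1| dm < ∞`; equivalently, `ρ_g − 1` is a compactly supported locally constant
real-valued function. -/
theorem padicAff_density_integrable (p : ℕ) [Fact p.Prime] (m : Measure ℚ_[p])
    [m.IsAddHaarMeasure] (hm : m (Metric.closedBall 0 1) = 1)
    (N : ℕ) (c : Fin N → ℚ_[p]) (r : Fin N → ℝ) (hr : ∀ k, 0 < r k)
    (B : Fin N → Set ℚ_[p]) (hB : ∀ k, B k = Metric.closedBall (c k) (r k))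
    (hdisj : (Set.univ : Set (Fin N)).Pairwise (fun i j => Disjoint (B i) (B j)))
    (K : Set ℚ_[p]) (hK : K = ⋃ k, B k)
    (aco : Fin N → ℚ_[p]) (ha : ∀ k, aco k ≠ 0) (bco : Fin N → ℚ_[p])
    (C : Fin N → Set ℚ_[p]) (hC : ∀ k, C k = (fun x => (x + bco k) / aco k) '' B k)
    (ρ : ℚ_[p] → ℝ)
    (hρ : ∀ x, ρ x = (∑ k, Set.indicator (C k) (fun _ => ‖aco k‖) x)
        + Set.indicator Kᶜ (fun _ => (1 : ℝ)) x) :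
    (∫⁻ x, ENNReal.ofReal |ρ x - 1| ∂m) < ∞ ∧
    HasCompactSupport (fun x => ρ x - 1) ∧
    IsLocallyConstant (fun x => ρ x - 1) :=
  padicAff_density_integrable_general p m N c r hr B hB K hK aco ha bco C hC ρ hρ
end

section
/- For every element g of the infinite-dimensional p-adic affine group and every locally constant compactly supported function f : ℚ_p → ℂ, the function (gf)(x) = f((x + b(x))/a(x)) is again locally constant and compactly supported. -/
/-- An element of the infinite-dimensional `p`-adic affine group. -/
structure PadicAff (p : ℕ) [Fact p.Prime] where
  a : ℚ_[p] → ℚ_[p]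
  b : ℚ_[p] → ℚ_[p]
  b_locallyConstant : IsLocallyConstant b
  b_compactSupport : HasCompactSupport b
  a_locallyConstant : IsLocallyConstant a
  a_ne_zero : ∀ x, a x ≠ 0
  a_eq_one_outside : ∃ K : Set ℚ_[p], IsCompact K ∧ ∀ x ∉ K, a x = 1

/-- For `g` in the infinite-dimensional `p`-adic affine group and `f : ℚ_p → ℂ`
locally constant with compact support, the function `(gf)(x) = f((x + b(x))/a(x))`
is again locally constant with compact support. -/
theorem padicAff_act_mem_test_functions (p : ℕ) [Fact p.Prime]
    (g : PadicAff p) (f : ℚ_[p] → ℂ)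
    (hf_lc : IsLocallyConstant f) (hf_supp : HasCompactSupport f) :
    IsLocallyConstant (fun x => f ((x + g.b x) / g.a x)) ∧
    HasCompactSupport (fun x => f ((x + g.b x) / g.a x)) := by
  obtain ⟨K, hK, hKa⟩ := g.a_eq_one_outside
  have hcont : Continuous fun x : ℚ_[p] => (x + g.b x) / g.a x :=
    (continuous_id.add g.b_locallyConstant.continuous).div
      g.a_locallyConstant.continuous g.a_ne_zero
  refine ⟨hf_lc.comp_continuous hcont, ?_⟩
  apply HasCompactSupport.intro ((hK.union g.b_compactSupport).union hf_supp)
  intro x hx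
  simp only [Set.mem_union, not_or] at hx
  obtain ⟨⟨hxK, hxb⟩, hxf⟩ := hx
  have hb : g.b x = 0 := image_eq_zero_of_notMem_tsupport hxb
  have ha : g.a x = 1 := hKa x hxK
  simp [hb, ha, image_eq_zero_of_notMem_tsupport hxf]
end
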